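/- If the normalized Randić function R̄_α of a finite simple connected graph attains a local maximum at α* ≠ 0, then log R̄_{α*} = H_E^{α*} − H_V^{α*}, the difference of the Shannon entropies of the degree-based edge and vertex distributions at parameter α*. -/

import Mathlib

/-!
For weights `b i > 0` and `Z(a) = ∑ b i ^ a`, the distribution `p i = b i ^ a / Z(a)` has
`log p i = a log (b i) - log Z(a)`, so its entropy is `log Z(a) - a Z'(a) / Z(a)`. The edge and
vertex distributions are of this form with `Z = R_a` and `Z = ∑ d_v ^ (2a)`, hence
`H_E - H_V = log R̄_a - a ((log R_a)' - (log ∑ d_v ^ (2a))')`, and the bracket is the derivative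
of `log R̄_a`, which vanishes at a local maximum.
-/

open Finset

variable {V : Type*}

/-- The product of endpoint degrees, raised to power `α`, as a function on `Sym2 V`. -/
noncomputable def degProd [Fintype V] (G : SimpleGraph V) [DecidableRel G.Adj] (α : ℝ) :
    Sym2 V → ℝ :=
  Sym2.lift ⟨fun u v => ((G.degree u : ℝ) * (G.degree v : ℝ)) ^ α,
    fun u v => by simp [mul_comm]⟩

/-- The general Randić index `R_α(G) = ∑_{uv ∈ E} (d_u d_v)^α`. -/
noncomputable def randic [Fintype V] [DecidableEq V] (G : SimpleGraph V) [DecidableRel G.Adj]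
    (α : ℝ) : ℝ :=
  ∑ e ∈ G.edgeFinset, degProd G α e

/-- `lam` is the largest (real) eigenvalue of the symmetric matrix `A`,
i.e. the spectral radius for an adjacency matrix. -/
def IsMaxEigenvalue [Fintype V] (A : Matrix V V ℝ) (lam : ℝ) : Prop :=
  (∃ x : V → ℝ, x ≠ 0 ∧ A.mulVec x = lam • x) ∧
  ∀ (μ : ℝ) (x : V → ℝ), x ≠ 0 → A.mulVec x = μ • x → μ ≤ lam

/-- The vertex normalization `∑_{v ∈ V} d_v^{2α}`. -/
noncomputable def vertexSum [Fintype V] (G : SimpleGraph V) [DecidableRel G.Adj] (α : ℝ) : ℝ :=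
  ∑ v : V, (G.degree v : ℝ) ^ (2 * α)

/-- The normalized Randić function `R̄_α = (∑_{uv∈E} (d_u d_v)^α) / (∑_{v∈V} d_v^{2α})`. -/
noncomputable def normRandic [Fintype V] [DecidableEq V] (G : SimpleGraph V)
    [DecidableRel G.Adj] (α : ℝ) : ℝ :=
  randic G α / vertexSum G α

/-- Shannon entropy `H_E^α` of the edge distribution `p_E^α(uv) = (d_u d_v)^α / R_α`. -/
noncomputable def edgeEntropy [Fintype V] [DecidableEq V] (G : SimpleGraph V)
    [DecidableRel G.Adj] (α : ℝ) : ℝ :=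
  -∑ e ∈ G.edgeFinset,
      (degProd G α e / randic G α) * Real.log (degProd G α e / randic G α)

/-- Shannon entropy `H_V^α` of the vertex distribution `p_V^α(v) = d_v^{2α} / ∑_w d_w^{2α}`. -/
noncomputable def vertexEntropy [Fintype V] (G : SimpleGraph V)
    [DecidableRel G.Adj] (α : ℝ) : ℝ :=
  -∑ v : V,
      ((G.degree v : ℝ) ^ (2 * α) / vertexSum G α) *
        Real.log ((G.degree v : ℝ) ^ (2 * α) / vertexSum G α)

open Real

theorem Real.neg_sum_div_mul_log_div_sum {ι : Type*} (s : Finset ι) (w : ι → ℝ)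
    (hW : ∑ i ∈ s, w i ≠ 0) :
    -∑ i ∈ s, w i / (∑ j ∈ s, w j) * log (w i / ∑ j ∈ s, w j) =
      log (∑ i ∈ s, w i) - (∑ i ∈ s, w i * log (w i)) / ∑ i ∈ s, w i := by
  set W := ∑ i ∈ s, w i
  have hterm : ∀ i ∈ s, w i / W * log (w i / W) = (w i * log (w i) - log W * w i) / W := by
    intro i _
    rcases eq_or_ne (w i) 0 with hi | hi
    · simp [hi]
    · rw [log_div hi hW]
      ring
  rw [sum_congr rfl hterm, ← sum_div, sum_sub_distrib, ← mul_sum]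
  field_simp
  ring

section PowerSum

variable {ι : Type*} (s : Finset ι) {b : ι → ℝ}

theorem hasDerivAt_sum_rpow (hb : ∀ i ∈ s, 0 < b i) (a : ℝ) :
    HasDerivAt (fun x => ∑ i ∈ s, b i ^ x) (∑ i ∈ s, b i ^ a * log (b i)) a :=
  HasDerivAt.fun_sum fun i hi => (hasStrictDerivAt_const_rpow (hb i hi) a).hasDerivAt

theorem sum_rpow_pos (hb : ∀ i ∈ s, 0 < b i) (hs : s.Nonempty) (a : ℝ) :
    0 < ∑ i ∈ s, b i ^ a :=
  sum_pos (fun i hi => rpow_pos_of_pos (hb i hi) a) hs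

theorem neg_sum_rpow_div_mul_log (hb : ∀ i ∈ s, 0 < b i) (hs : s.Nonempty) (a : ℝ) :
    -∑ i ∈ s, b i ^ a / (∑ j ∈ s, b j ^ a) * log (b i ^ a / ∑ j ∈ s, b j ^ a) =
      log (∑ i ∈ s, b i ^ a) - a * logDeriv (fun x => ∑ i ∈ s, b i ^ x) a := by
  have hlog : ∑ i ∈ s, b i ^ a * log (b i ^ a) = a * ∑ i ∈ s, b i ^ a * log (b i) := by
    rw [mul_sum]
    refine sum_congr rfl fun i hi => ?_
    rw [log_rpow (hb i hi)]
    ring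
  rw [Real.neg_sum_div_mul_log_div_sum s _ (sum_rpow_pos s hb hs a).ne', hlog, logDeriv_apply,
    (hasDerivAt_sum_rpow s hb a).deriv, mul_div_assoc]

end PowerSum

section Graph

variable [Fintype V] (G : SimpleGraph V) [DecidableRel G.Adj]

theorem degProd_eq_rpow (α : ℝ) (e : Sym2 V) : degProd G α e = degProd G 1 e ^ α := by
  induction e using Sym2.ind with
  | _ u v => simp only [degProd, Sym2.lift_mk, rpow_one]

theorem degProd_one_pos (hdeg : ∀ v : V, 1 ≤ G.degree v) (e : Sym2 V) : 0 < degProd G 1 e := by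
  induction e using Sym2.ind with
  | _ u v =>
    have hu : (0 : ℝ) < G.degree u := by exact_mod_cast hdeg u
    have hv : (0 : ℝ) < G.degree v := by exact_mod_cast hdeg v
    simpa only [degProd, Sym2.lift_mk, rpow_one] using mul_pos hu hv

theorem randic_eq_sum_rpow [DecidableEq V] :
    randic G = fun α => ∑ e ∈ G.edgeFinset, degProd G 1 e ^ α := by
  funext α
  exact sum_congr rfl fun e _ => degProd_eq_rpow G α e

theorem vertexSum_eq_sum_rpow :
    vertexSum G = fun α => ∑ v : V, ((G.degree v : ℝ) ^ (2 : ℝ)) ^ α := by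
  funext α
  exact sum_congr rfl fun v _ => rpow_mul (Nat.cast_nonneg _) 2 α

theorem degree_rpow_two_pos (hdeg : ∀ v : V, 1 ≤ G.degree v) (v : V) :
    0 < (G.degree v : ℝ) ^ (2 : ℝ) :=
  rpow_pos_of_pos (by exact_mod_cast hdeg v) 2

theorem edgeEntropy_eq [DecidableEq V] (hE : G.edgeFinset.Nonempty)
    (hdeg : ∀ v : V, 1 ≤ G.degree v) (α : ℝ) :
    edgeEntropy G α = log (randic G α) - α * logDeriv (randic G) α := by
  simp only [edgeEntropy, randic_eq_sum_rpow, degProd_eq_rpow G α]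
  exact neg_sum_rpow_div_mul_log _ (fun e _ => degProd_one_pos G hdeg e) hE α

theorem vertexEntropy_eq [Nonempty V] (hdeg : ∀ v : V, 1 ≤ G.degree v) (α : ℝ) :
    vertexEntropy G α = log (vertexSum G α) - α * logDeriv (vertexSum G) α := by
  simp only [vertexEntropy, vertexSum_eq_sum_rpow, rpow_mul (Nat.cast_nonneg _)]
  exact neg_sum_rpow_div_mul_log _ (fun v _ => degree_rpow_two_pos G hdeg v) univ_nonempty α

end Graph

theorem log_normalized_randic_at_local_max_general
    [Fintype V] [DecidableEq V] [Nonempty V] (G : SimpleGraph V) [DecidableRel G.Adj]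
    (hE : G.edgeFinset.Nonempty) (hdeg : ∀ v : V, 1 ≤ G.degree v)
    (αstar : ℝ)
    (hmax : IsLocalMax (fun a : ℝ => normRandic G a) αstar) :
    Real.log (normRandic G αstar) = edgeEntropy G αstar - vertexEntropy G αstar := by
  have hedge := fun e (_ : e ∈ G.edgeFinset) => degProd_one_pos G hdeg e
  have hvert := fun v (_ : v ∈ (univ : Finset V)) => degree_rpow_two_pos G hdeg v
  have hR : 0 < randic G αstar := by
    rw [randic_eq_sum_rpow]; exact sum_rpow_pos _ hedge hE αstar
  have hS : 0 < vertexSum G αstar := by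
    rw [vertexSum_eq_sum_rpow]; exact sum_rpow_pos _ hvert univ_nonempty αstar
  have hRdiff : DifferentiableAt ℝ (randic G) αstar := by
    rw [randic_eq_sum_rpow]; exact (hasDerivAt_sum_rpow _ hedge αstar).differentiableAt
  have hSdiff : DifferentiableAt ℝ (vertexSum G) αstar := by
    rw [vertexSum_eq_sum_rpow]; exact (hasDerivAt_sum_rpow _ hvert αstar).differentiableAt
  have hcrit : logDeriv (randic G) αstar = logDeriv (vertexSum G) αstar := by
    have hdiv := logDeriv_div αstar hR.ne' hS.ne' hRdiff hSdiff
    have hzero : deriv (fun a => randic G a / vertexSum G a) αstar = 0 := hmax.deriv_eq_zero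
    rw [logDeriv_apply, hzero, zero_div] at hdiv
    linarith
  rw [normRandic, log_div hR.ne' hS.ne', edgeEntropy_eq G hE hdeg, vertexEntropy_eq G hdeg, hcrit]
  ring

theorem log_normalized_randic_at_local_max
    [Fintype V] [DecidableEq V] [Nonempty V] (G : SimpleGraph V) [DecidableRel G.Adj]
    (hconn : G.Connected) (hE : G.edgeFinset.Nonempty) (hdeg : ∀ v : V, 1 ≤ G.degree v)
    (αstar : ℝ) (hα : αstar ≠ 0)
    (hmax : IsLocalMax (fun a : ℝ => normRandic G a) αstar) :
    Real.log (normRandic G αstar) = edgeEntropy G αstar - vertexEntropy G αstar :=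
  log_normalized_randic_at_local_max_general G hE hdeg αstar hmax
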